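/- Suppose {(R_j, B_j, L_j)}_{j≥1} forms a Riesz sequence tower with bounds C_j ≤ D_j where ∏C_j > 0 and ∏D_j < ∞, and the associated infinite convolution measure μ = δ_{𝐑_1⁻¹B_1}∗δ_{𝐑_2⁻¹B_2}∗⋯ satisfies the no-overlap condition. Let Λ = ⋃_{n≥1} Λ_n where Λ_n = L_1 + R_1ᵀL_2 + ⋯ + (R_1ᵀ⋯R_{n-1}ᵀ)L_n. Then the exponentials {e^{2πi⟨λ,x⟩} : λ ∈ Λ} form a Riesz sequence for L²(μ) with bounds ∏_{j=1}^∞ C_j and ∏_{j=1}^∞ D_j. -/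

import Mathlib

open Complex Matrix Finset

noncomputable section

/-- Real version of an integer matrix. -/
def realMat {d : ℕ} (R : Matrix (Fin d) (Fin d) ℤ) : Matrix (Fin d) (Fin d) ℝ :=
  R.map (Int.cast)

/-- `R` is expanding: all (complex) eigenvalues have modulus strictly greater than 1. -/
def Expanding {d : ℕ} (R : Matrix (Fin d) (Fin d) ℤ) : Prop :=
  ∀ z : ℂ, (R.map (Int.cast : ℤ → ℂ)).charpoly.IsRoot z → 1 < ‖z‖

/-- Euclidean inner product on `ℝ^d`. -/
def ip {d : ℕ} (x y : Fin d → ℝ) : ℝ := ∑ i, x i * y i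

/-- The vector `e_{R,λ} = (1/√#B) (e^{2πi⟨R⁻¹b,λ⟩})_{b∈B} ∈ ℂ^{#B}`. -/
def eVec {d : ℕ} (R : Matrix (Fin d) (Fin d) ℤ) (B : Finset (Fin d → ℤ))
    (lam : Fin d → ℤ) : B → ℂ :=
  fun b => ((Real.sqrt B.card : ℂ))⁻¹ *
    Complex.exp (2 * Real.pi * Complex.I *
      (ip ((realMat R)⁻¹ *ᵥ (fun j => ((b : Fin d → ℤ) j : ℝ))) (fun i => (lam i : ℝ))))

/-- `(R,B,L)` is a frame triple with bounds `C ≤ D`. -/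
def IsFrameTriple {d : ℕ} (R : Matrix (Fin d) (Fin d) ℤ) (B L : Finset (Fin d → ℤ))
    (C D : ℝ) : Prop :=
  ∀ x : B → ℂ,
    C * ∑ b, ‖x b‖ ^ 2 ≤ ∑ lam ∈ L, ‖∑ b, x b * (starRingEnd ℂ) (eVec R B lam b)‖ ^ 2 ∧
    ∑ lam ∈ L, ‖∑ b, x b * (starRingEnd ℂ) (eVec R B lam b)‖ ^ 2 ≤ D * ∑ b, ‖x b‖ ^ 2

/-- `(R,B,L)` is a Riesz sequence triple with bounds `C ≤ D`. -/
def IsRieszTriple {d : ℕ} (R : Matrix (Fin d) (Fin d) ℤ) (B L : Finset (Fin d → ℤ))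
    (C D : ℝ) : Prop :=
  ∀ a : L → ℂ,
    C * ∑ lam, ‖a lam‖ ^ 2 ≤ ∑ b, ‖∑ lam, a lam * eVec R B lam b‖ ^ 2 ∧
    ∑ b, ‖∑ lam, a lam * eVec R B lam b‖ ^ 2 ≤ D * ∑ lam, ‖a lam‖ ^ 2


/-- `𝐑_n = R_n ⋯ R_1` (with 0-based indexing: `bigR R n = R (n-1) * ⋯ * R 0`). -/
def bigR {d : ℕ} (R : ℕ → Matrix (Fin d) (Fin d) ℤ) : ℕ → Matrix (Fin d) (Fin d) ℤ
  | 0 => 1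
  | n + 1 => R n * bigR R n

def castVec {d : ℕ} (v : Fin d → ℤ) : Fin d → ℝ := fun i => (v i : ℝ)

/-- The point `𝐑_n⁻¹𝐛 = ∑_{k=1}^n 𝐑_k⁻¹ b_k` associated to a digit tuple. -/
def tuplePoint {d n : ℕ} (R : ℕ → Matrix (Fin d) (Fin d) ℤ) (B : ℕ → Finset (Fin d → ℤ))
    (t : (j : Fin n) → (B (j : ℕ))) : Fin d → ℝ :=
  ∑ j : Fin n, (realMat (bigR R ((j : ℕ) + 1)))⁻¹ *ᵥ castVec (t j)

/-- The frequency `λ = ∑_{k=1}^n (R_1ᵀ⋯R_{k-1}ᵀ) l_k ∈ Λ_n` associated to a tuple. -/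
def tupleFreq {d n : ℕ} (R : ℕ → Matrix (Fin d) (Fin d) ℤ) (L : ℕ → Finset (Fin d → ℤ))
    (l : (j : Fin n) → (L (j : ℕ))) : Fin d → ℤ :=
  ∑ j : Fin n, (bigR R (j : ℕ))ᵀ *ᵥ ((l j : Fin d → ℤ))

/-- The concatenated exponential vector entry
`(1/√(∏ #B_j)) e^{2πi ⟨𝐑_n⁻¹𝐛, λ⟩}` for the triple `(𝐑_n, 𝐁_n, Λ_n)`. -/
def bigEVec {d n : ℕ} (R : ℕ → Matrix (Fin d) (Fin d) ℤ) (B L : ℕ → Finset (Fin d → ℤ))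
    (t : (j : Fin n) → (B (j : ℕ))) (l : (j : Fin n) → (L (j : ℕ))) : ℂ :=
  ((Real.sqrt (∏ j ∈ Finset.range n, ((B j).card : ℝ)) : ℂ))⁻¹ *
    Complex.exp (2 * Real.pi * Complex.I *
      (ip (tuplePoint R B t) (castVec (tupleFreq R L l))))


open MeasureTheory

/-- The level-`n` measure `μ_n = δ_{𝐑_1⁻¹B_1} ∗ ⋯ ∗ δ_{𝐑_n⁻¹B_n}`, realized as the uniform
measure on the points `∑_{k=1}^n 𝐑_k⁻¹ b_k`, `b_k ∈ B_k`. -/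
def muLevel {d : ℕ} (R : ℕ → Matrix (Fin d) (Fin d) ℤ) (B : ℕ → Finset (Fin d → ℤ))
    (n : ℕ) : Measure (Fin d → ℝ) :=
  (∏ j ∈ Finset.range n, ((B j).card : ENNReal))⁻¹ •
    ∑ t : (j : Fin n) → (B (j : ℕ)), Measure.dirac (tuplePoint R B t)

/-- The tail attractor `K_n = {∑_{k=n+1}^∞ 𝐑_k⁻¹ b_k : b_k ∈ B_k}`. -/
def tailSet {d : ℕ} (R : ℕ → Matrix (Fin d) (Fin d) ℤ) (B : ℕ → Finset (Fin d → ℤ))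
    (n : ℕ) : Set (Fin d → ℝ) :=
  {x | ∃ b : ℕ → (Fin d → ℤ), (∀ k, b k ∈ B (n + k)) ∧
    x = ∑' k : ℕ, (realMat (bigR R (n + k + 1)))⁻¹ *ᵥ castVec (b k)}

/-- The cell `K_{𝐛,n} = 𝐑_n⁻¹𝐛 + K_n` attached to a digit tuple `𝐛 ∈ 𝐁_n`. -/
def cell {d n : ℕ} (R : ℕ → Matrix (Fin d) (Fin d) ℤ) (B : ℕ → Finset (Fin d → ℤ))
    (t : (j : Fin n) → (B (j : ℕ))) : Set (Fin d → ℝ) :=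
  (fun y => tuplePoint R B t + y) '' tailSet R B n

/-- The no-overlap condition for `μ`. -/
def NoOverlap {d : ℕ} (R : ℕ → Matrix (Fin d) (Fin d) ℤ) (B : ℕ → Finset (Fin d → ℤ))
    (μ : Measure (Fin d → ℝ)) : Prop :=
  ∀ (n : ℕ) (t t' : (j : Fin n) → (B (j : ℕ))), t ≠ t' →
    μ (cell R B t ∩ cell R B t') = 0

/-- The Fourier transform `μ̂(y) = ∫ e^{-2πi⟨y,x⟩} dμ(x)`. -/
def fourierTf {d : ℕ} (μ : Measure (Fin d → ℝ)) (y : Fin d → ℝ) : ℂ :=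
  ∫ x, Complex.exp (-(2 * Real.pi * Complex.I) * (ip y x)) ∂μ

/-- `Λ = ⋃_n Λ_n`, `Λ_n = L_1 + R_1ᵀ L_2 + ⋯ + (R_1ᵀ⋯R_{n-1}ᵀ) L_n`. -/
def freqSet {d : ℕ} (R : ℕ → Matrix (Fin d) (Fin d) ℤ) (L : ℕ → Finset (Fin d → ℤ)) :
    Set (Fin d → ℤ) :=
  {v | ∃ (n : ℕ) (l : (j : Fin n) → (L (j : ℕ))), v = tupleFreq R L l}

/-!
Splitting off the last digit, the level-`(n+1)` vectors `(𝐑_{n+1}, 𝐁_{n+1}, Λ_{n+1})` are the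
tensor product of the level-`n` vectors with those of `(R_{n+1}, B_{n+1}, L_{n+1})`, twisted by
unimodular factors: the cross term `⟨𝐑_n⁻¹𝐛, 𝐑_nᵀ l⟩` is an integer. Hence level `n` is a Riesz
sequence with bounds `∏_{j≤n} C_j` and `∏_{j≤n} D_j`, and since these are positive, distinct digit
tuples give distinct frequencies. Since `0 ∈ L_j`, the finitely many frequencies of a
trigonometric polynomial on `Λ` all lie in `Λ_n` for large `n`, where its squared `L²(μ_n)` norm
is the finite-dimensional Riesz sum. Weak convergence of `μ_n` passes both bounds to `μ`.
-/

/-- `IsRieszTriple R B L C D` unfolds to `IsRieszFamily (fun lam : L => eVec R B lam) C D`. -/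
def IsRieszFamily {ι κ : Type*} [Fintype ι] [Fintype κ] (v : ι → κ → ℂ) (C D : ℝ) : Prop :=
  ∀ a : ι → ℂ,
    C * ∑ i, ‖a i‖ ^ 2 ≤ ∑ k, ‖∑ i, a i * v i k‖ ^ 2 ∧
    ∑ k, ‖∑ i, a i * v i k‖ ^ 2 ≤ D * ∑ i, ‖a i‖ ^ 2

namespace IsRieszFamily

variable {ι κ ι' κ' : Type*} [Fintype ι] [Fintype κ] [Fintype ι'] [Fintype κ']

theorem of_equiv {v : ι → κ → ℂ} {w : ι' → κ' → ℂ} {C D : ℝ} (hw : IsRieszFamily w C D)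
    (e : ι' ≃ ι) (f : κ' ≃ κ) (h : ∀ i k, v (e i) (f k) = w i k) : IsRieszFamily v C D := by
  intro a
  have hsum : ∀ k, ∑ i, a (e i) * w i k = ∑ i, a i * v i (f k) := fun k => by
    simp only [← h]
    exact e.sum_comp fun i => a i * v i (f k)
  simpa only [Function.comp_apply, e.sum_comp fun i => ‖a i‖ ^ 2, hsum,
    f.sum_comp fun k => ‖∑ i, a i * v i k‖ ^ 2] using hw (a ∘ e)

theorem of_unique [Unique ι] [Unique κ] : IsRieszFamily (fun (_ : ι) (_ : κ) => (1 : ℂ)) 1 1 := by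
  intro a
  simp

theorem twisted_prod {v : ι → κ → ℂ} {w : ι' → κ' → ℂ} {P Q C D : ℝ}
    (hv : IsRieszFamily v P Q) (hw : IsRieszFamily w C D) (hP : 0 ≤ P) (hQ : 0 ≤ Q)
    (φ : κ' → ι → ℂ) (hφ : ∀ b l, ‖φ b l‖ = 1) :
    IsRieszFamily (fun (i : ι' × ι) (k : κ' × κ) => w i.1 k.1 * v i.2 k.2 * φ k.1 i.2)
      (P * C) (Q * D) := by
  intro a
  set c : κ' → ι → ℂ := fun b l => φ b l * ∑ m, a (m, l) * w m b
  set X := ∑ l, ∑ b, ‖∑ m, a (m, l) * w m b‖ ^ 2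
  have hnorm_a : ∑ i, ‖a i‖ ^ 2 = ∑ l, ∑ m, ‖a (m, l)‖ ^ 2 := by
    rw [Fintype.sum_prod_type, Finset.sum_comm]
  have hnorm_c : ∑ b, ∑ l, ‖c b l‖ ^ 2 = X := by
    simp only [c, norm_mul, hφ, one_mul]
    exact Finset.sum_comm
  have hsplit : ∑ k : κ' × κ, ‖∑ i : ι' × ι, a i * (w i.1 k.1 * v i.2 k.2 * φ k.1 i.2)‖ ^ 2
      = ∑ b, ∑ k, ‖∑ l, c b l * v l k‖ ^ 2 := by
    rw [Fintype.sum_prod_type]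
    refine Finset.sum_congr rfl fun b _ => Finset.sum_congr rfl fun k _ => ?_
    rw [Fintype.sum_prod_type, Finset.sum_comm]
    simp only [c, Finset.sum_mul, Finset.mul_sum]
    congr 2
    refine Finset.sum_congr rfl fun l _ => Finset.sum_congr rfl fun m _ => ?_
    ring
  have hw_bounds : C * ∑ i, ‖a i‖ ^ 2 ≤ X ∧ X ≤ D * ∑ i, ‖a i‖ ^ 2 := by
    rw [hnorm_a, Finset.mul_sum, Finset.mul_sum]
    exact ⟨Finset.sum_le_sum fun l _ => (hw fun m => a (m, l)).1,
      Finset.sum_le_sum fun l _ => (hw fun m => a (m, l)).2⟩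
  rw [hsplit, mul_assoc, mul_assoc]
  constructor
  · calc P * (C * ∑ i, ‖a i‖ ^ 2) ≤ P * X := mul_le_mul_of_nonneg_left hw_bounds.1 hP
      _ = ∑ b, P * ∑ l, ‖c b l‖ ^ 2 := by rw [← Finset.mul_sum, hnorm_c]
      _ ≤ _ := Finset.sum_le_sum fun b _ => (hv (c b)).1
  · calc ∑ b, ∑ k, ‖∑ l, c b l * v l k‖ ^ 2 ≤ ∑ b, Q * ∑ l, ‖c b l‖ ^ 2 :=
          Finset.sum_le_sum fun b _ => (hv (c b)).2
      _ = Q * X := by rw [← Finset.mul_sum, hnorm_c]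
      _ ≤ Q * (D * ∑ i, ‖a i‖ ^ 2) := mul_le_mul_of_nonneg_left hw_bounds.2 hQ

theorem injective {v : ι → κ → ℂ} {C D : ℝ} (hv : IsRieszFamily v C D) (hC : 0 < C) :
    Function.Injective v := by
  classical
  intro i j hij
  by_contra hne
  set a : ι → ℂ := Pi.single i 1 - Pi.single j 1
  have hzero : ∀ k, ∑ x, a x * v x k = 0 := by
    simp [a, sub_mul, sum_sub_distrib, Pi.single_apply, hij]
  have hpos : 0 < ∑ x, ‖a x‖ ^ 2 :=
    sum_pos' (fun x _ => by positivity) ⟨i, mem_univ i, by simp [a, Ne.symm hne]⟩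
  have := (hv a).1
  simp only [hzero, norm_zero, ne_eq, OfNat.ofNat_ne_zero, not_false_eq_true, zero_pow,
    sum_const_zero] at this
  exact this.not_gt (mul_pos hC hpos)

end IsRieszFamily

theorem Fintype.sum_comp_eq_sum_of_injective {ι κ M : Type*} [Fintype ι] [AddCommMonoid M]
    {φ : ι → κ} (hφ : Function.Injective φ) {s : Finset κ} (hs : ↑s ⊆ Set.range φ) {g : κ → M}
    (hg : ∀ k ∉ s, g k = 0) : ∑ i, g (φ i) = ∑ k ∈ s, g k := by
  classical
  rw [← sum_image hφ.injOn]
  refine (Finset.sum_subset (fun k hk => ?_) fun k _ hks => hg k hks).symm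
  obtain ⟨i, rfl⟩ := hs hk
  exact mem_image_of_mem φ (mem_univ i)

variable {d : ℕ}

theorem ip_comm (x y : Fin d → ℝ) : ip x y = ip y x := dotProduct_comm x y

theorem ip_add_left (x y z : Fin d → ℝ) : ip (x + y) z = ip x z + ip y z :=
  add_dotProduct x y z

theorem ip_add_right (x y z : Fin d → ℝ) : ip x (y + z) = ip x y + ip x z :=
  dotProduct_add x y z

theorem ip_transpose_mulVec (A : Matrix (Fin d) (Fin d) ℝ) (x y : Fin d → ℝ) :
    ip x (Aᵀ *ᵥ y) = ip (A *ᵥ x) y := by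
  change x ⬝ᵥ (Aᵀ *ᵥ y) = (A *ᵥ x) ⬝ᵥ y
  rw [dotProduct_mulVec, vecMul_transpose]

theorem realMat_mul (M N : Matrix (Fin d) (Fin d) ℤ) :
    realMat (M * N) = realMat M * realMat N := by
  simpa [realMat] using Matrix.map_mul (f := Int.castRingHom ℝ) (L := M) (M := N)

theorem realMat_transpose (M : Matrix (Fin d) (Fin d) ℤ) : realMat Mᵀ = (realMat M)ᵀ := rfl

theorem det_map_intCast {K : Type*} [CommRing K] (R : Matrix (Fin d) (Fin d) ℤ) :
    (R.map (Int.cast : ℤ → K)).det = R.det := by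
  simpa using ((Int.castRingHom K).map_det R).symm

theorem Expanding.det_realMat_ne_zero {R : Matrix (Fin d) (Fin d) ℤ} (h : Expanding R) :
    (realMat R).det ≠ 0 := by
  intro hdet
  rw [realMat, det_map_intCast, Int.cast_eq_zero] at hdet
  have hroot : (R.map (Int.cast : ℤ → ℂ)).charpoly.IsRoot 0 := by
    rw [Polynomial.IsRoot, eval_charpoly, map_zero, zero_sub, det_neg, det_map_intCast, hdet]
    simp
  exact absurd (h 0 hroot) (by norm_num)

theorem castVec_add (u v : Fin d → ℤ) : castVec (u + v) = castVec u + castVec v := by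
  ext i
  simp [castVec]

theorem castVec_mulVec (M : Matrix (Fin d) (Fin d) ℤ) (v : Fin d → ℤ) :
    castVec (M *ᵥ v) = realMat M *ᵥ castVec v := by
  ext i
  simp [castVec, realMat, mulVec, dotProduct]

theorem exp_two_pi_I_mul_ip_castVec (u v : Fin d → ℤ) :
    exp (2 * Real.pi * I * ip (castVec u) (castVec v)) = 1 := by
  have : (ip (castVec u) (castVec v) : ℂ) = ((u ⬝ᵥ v : ℤ) : ℂ) := by
    simp [ip, castVec, dotProduct]
  rw [this, mul_comm, ← exp_int_mul_two_pi_mul_I (u ⬝ᵥ v)]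

theorem norm_exp_two_pi_I_mul_ofReal (r : ℝ) : ‖exp (2 * Real.pi * I * r)‖ = 1 := by
  rw [show 2 * Real.pi * I * r = ((2 * Real.pi * r : ℝ) : ℂ) * I by push_cast; ring,
    norm_exp_ofReal_mul_I]

theorem eVec_apply (R : Matrix (Fin d) (Fin d) ℤ) (B : Finset (Fin d → ℤ)) (lam : Fin d → ℤ)
    (b : B) : eVec R B lam b = (Real.sqrt B.card : ℂ)⁻¹ *
      exp (2 * Real.pi * I * ip ((realMat R)⁻¹ *ᵥ castVec b) (castVec lam)) := rfl

section Tower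

variable {R : ℕ → Matrix (Fin d) (Fin d) ℤ} {B L : ℕ → Finset (Fin d → ℤ)}

theorem bigR_succ (n : ℕ) : bigR R (n + 1) = R n * bigR R n := rfl

theorem tuplePoint_snoc {n : ℕ} (t : (j : Fin n) → B j) (b : B n) :
    tuplePoint R B (Fin.snoc t b : (j : Fin (n + 1)) → B j)
      = tuplePoint R B t + (realMat (bigR R (n + 1)))⁻¹ *ᵥ castVec b := by
  simp [tuplePoint, Fin.sum_univ_castSucc]

theorem tupleFreq_snoc {n : ℕ} (l : (j : Fin n) → L j) (m : L n) :
    tupleFreq R L (Fin.snoc l m : (j : Fin (n + 1)) → L j)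
      = tupleFreq R L l + (bigR R n)ᵀ *ᵥ (m : Fin d → ℤ) := by
  simp [tupleFreq, Fin.sum_univ_castSucc]

variable (hR : ∀ j, (realMat (R j)).det ≠ 0)
include hR

theorem det_realMat_bigR_ne_zero (n : ℕ) : (realMat (bigR R n)).det ≠ 0 := by
  induction n with
  | zero => simp [bigR, realMat]
  | succ n ih => simpa [bigR_succ, realMat_mul] using ⟨hR n, ih⟩

theorem realMat_bigR_mulVec_inv_succ (n : ℕ) (x : Fin d → ℝ) :
    realMat (bigR R n) *ᵥ ((realMat (bigR R (n + 1)))⁻¹ *ᵥ x) = (realMat (R n))⁻¹ *ᵥ x := by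
  rw [bigR_succ, realMat_mul, Matrix.mul_inv_rev, mulVec_mulVec, ← Matrix.mul_assoc,
    mul_nonsing_inv _ (det_realMat_bigR_ne_zero hR n).isUnit, Matrix.one_mul]

theorem exists_realMat_bigR_mulVec_tuplePoint_eq_castVec :
    ∀ (n : ℕ) (t : (j : Fin n) → B j), ∃ v, realMat (bigR R n) *ᵥ tuplePoint R B t = castVec v
  | 0, t => ⟨0, by ext; simp [tuplePoint, castVec]⟩
  | n + 1, t => by
    obtain ⟨v, hv⟩ := exists_realMat_bigR_mulVec_tuplePoint_eq_castVec n (Fin.init t)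
    refine ⟨R n *ᵥ v + t (Fin.last n), ?_⟩
    conv_lhs => rw [← Fin.snoc_init_self t]
    rw [tuplePoint_snoc, mulVec_add, mulVec_mulVec,
      mul_nonsing_inv _ (det_realMat_bigR_ne_zero hR (n + 1)).isUnit, one_mulVec, bigR_succ,
      realMat_mul, ← mulVec_mulVec, hv, castVec_add, castVec_mulVec]

theorem bigEVec_snoc {n : ℕ} (t : (j : Fin n) → B j) (b : B n) (l : (j : Fin n) → L j)
    (m : L n) :
    bigEVec R B L (Fin.snoc t b : (j : Fin (n + 1)) → B j)
        (Fin.snoc l m : (j : Fin (n + 1)) → L j)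
      = eVec (R n) (B n) m b * bigEVec R B L t l *
        exp (2 * Real.pi * I *
          ip ((realMat (bigR R (n + 1)))⁻¹ *ᵥ castVec b) (castVec (tupleFreq R L l))) := by
  obtain ⟨v, hv⟩ := exists_realMat_bigR_mulVec_tuplePoint_eq_castVec hR n t
  have hinteger : ip (tuplePoint R B t) (castVec ((bigR R n)ᵀ *ᵥ (m : Fin d → ℤ)))
      = ip (castVec v) (castVec m) := by
    rw [castVec_mulVec, realMat_transpose, ip_transpose_mulVec, hv]
  have hlast : ip ((realMat (bigR R (n + 1)))⁻¹ *ᵥ castVec b)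
        (castVec ((bigR R n)ᵀ *ᵥ (m : Fin d → ℤ)))
      = ip ((realMat (R n))⁻¹ *ᵥ castVec b) (castVec m) := by
    rw [castVec_mulVec, realMat_transpose, ip_transpose_mulVec,
      realMat_bigR_mulVec_inv_succ hR]
  have hsqrt : Real.sqrt (∏ j ∈ range (n + 1), ((B j).card : ℝ))
      = Real.sqrt (∏ j ∈ range n, ((B j).card : ℝ)) * Real.sqrt (B n).card := by
    rw [prod_range_succ, Real.sqrt_mul (prod_nonneg fun j _ => Nat.cast_nonneg _)]
  simp only [bigEVec, eVec_apply, tuplePoint_snoc, tupleFreq_snoc, castVec_add, ip_add_left,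
    ip_add_right, hinteger, hlast, hsqrt, ofReal_add, ofReal_mul, mul_add, exp_add,
    exp_two_pi_I_mul_ip_castVec, mul_inv]
  ring

theorem isRieszFamily_bigEVec {C D : ℕ → ℝ} (hC : ∀ j, 0 ≤ C j) (hD : ∀ j, 0 ≤ D j)
    (htriple : ∀ j, IsRieszTriple (R j) (B j) (L j) (C j) (D j)) (n : ℕ) :
    IsRieszFamily (fun (l : (j : Fin n) → L j) (t : (j : Fin n) → B j) => bigEVec R B L t l)
      (∏ j ∈ range n, C j) (∏ j ∈ range n, D j) := by
  induction n with
  | zero =>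
    have hone : ∀ (t : (j : Fin 0) → B j) (l : (j : Fin 0) → L j), bigEVec R B L t l = 1 := by
      simp [bigEVec, tuplePoint, ip]
    simpa [hone] using IsRieszFamily.of_unique
  | succ n ih =>
    rw [prod_range_succ, prod_range_succ]
    have hprod := ih.twisted_prod (htriple n) (prod_nonneg fun j _ => hC j)
      (prod_nonneg fun j _ => hD j) (fun (b : B n) l => exp (2 * Real.pi * I *
        ip ((realMat (bigR R (n + 1)))⁻¹ *ᵥ castVec b) (castVec (tupleFreq R L l))))
      fun b l => norm_exp_two_pi_I_mul_ofReal _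
    exact hprod.of_equiv (Fin.snocEquiv fun j => L j) (Fin.snocEquiv fun j => B j)
      fun i k => bigEVec_snoc hR k.2 k.1 i.2 i.1

end Tower

def expSum (a : (Fin d → ℤ) →₀ ℂ) (x : Fin d → ℝ) : ℂ :=
  ∑ lam ∈ a.support, a lam * exp (2 * Real.pi * I * ip (castVec lam) x)

theorem continuous_expSum (a : (Fin d → ℤ) →₀ ℂ) : Continuous (expSum a) := by
  unfold expSum ip
  fun_prop

theorem norm_expSum_le (a : (Fin d → ℤ) →₀ ℂ) (x : Fin d → ℝ) :
    ‖expSum a x‖ ≤ ∑ lam ∈ a.support, ‖a lam‖ :=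
  (norm_sum_le _ _).trans_eq <| sum_congr rfl fun lam _ => by
    rw [norm_mul, norm_exp_two_pi_I_mul_ofReal, mul_one]

section Levels

variable {R : ℕ → Matrix (Fin d) (Fin d) ℤ} {B L : ℕ → Finset (Fin d → ℤ)}

theorem injective_tupleFreq {n : ℕ} {P Q : ℝ}
    (h : IsRieszFamily (fun (l : (j : Fin n) → L j) (t : (j : Fin n) → B j) => bigEVec R B L t l)
      P Q) (hP : 0 < P) : Function.Injective (tupleFreq R L (n := n)) := fun l l' hll' =>
  h.injective hP (funext fun t => by simp only [bigEVec, hll'])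

theorem exists_tupleFreq_eq_of_le (h0L : ∀ j, (0 : Fin d → ℤ) ∈ L j) {m n : ℕ} (hmn : m ≤ n)
    (l : (j : Fin m) → L j) : ∃ l' : (j : Fin n) → L j, tupleFreq R L l' = tupleFreq R L l := by
  induction n, hmn using Nat.le_induction with
  | base => exact ⟨l, rfl⟩
  | succ n _ ih =>
    obtain ⟨l', hl'⟩ := ih
    exact ⟨Fin.snoc l' ⟨0, h0L n⟩, by simp [tupleFreq_snoc, hl']⟩

theorem eventually_subset_range_tupleFreq (h0L : ∀ j, (0 : Fin d → ℤ) ∈ L j)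
    (s : Finset (Fin d → ℤ)) (hs : ↑s ⊆ freqSet R L) :
    ∀ᶠ n in Filter.atTop, ↑s ⊆ Set.range (tupleFreq R L (n := n)) := by
  have hmem : ∀ lam ∈ s, ∀ᶠ n in Filter.atTop, lam ∈ Set.range (tupleFreq R L (n := n)) := by
    intro lam hlam
    obtain ⟨m, l, rfl⟩ := hs hlam
    exact Filter.eventually_atTop.2 ⟨m, fun n hmn => exists_tupleFreq_eq_of_le h0L hmn l⟩
  filter_upwards [(Filter.eventually_all_finset s).2 hmem] with n hn lam hlam using hn lam hlam

theorem integral_muLevel (n : ℕ) (g : (Fin d → ℝ) → ℝ) :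
    ∫ x, g x ∂muLevel R B n
      = (∏ j ∈ range n, ((B j).card : ℝ))⁻¹ * ∑ t : (j : Fin n) → B j, g (tuplePoint R B t) := by
  rw [muLevel, integral_smul_measure,
    integral_finsetSum_measure fun t _ => integrable_dirac enorm_lt_top, ENNReal.toReal_inv,
    ENNReal.toReal_prod]
  simp [integral_dirac]

variable {n : ℕ} {a : (Fin d → ℤ) →₀ ℂ} (hinj : Function.Injective (tupleFreq R L (n := n)))
  (hs : ↑a.support ⊆ Set.range (tupleFreq R L (n := n)))
include hinj hs

theorem sum_mul_bigEVec_eq_expSum (t : (j : Fin n) → B j) :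
    ∑ l, a (tupleFreq R L l) * bigEVec R B L t l
      = (Real.sqrt (∏ j ∈ range n, ((B j).card : ℝ)) : ℂ)⁻¹ * expSum a (tuplePoint R B t) := by
  rw [expSum, mul_sum, ← Fintype.sum_comp_eq_sum_of_injective hinj hs]
  · refine sum_congr rfl fun l _ => ?_
    rw [bigEVec, ip_comm]
    ring
  · intro lam hlam
    simp [Finsupp.notMem_support_iff.1 hlam]

theorem integral_muLevel_norm_expSum_sq :
    ∫ x, ‖expSum a x‖ ^ 2 ∂muLevel R B n
      = ∑ t : (j : Fin n) → B j, ‖∑ l, a (tupleFreq R L l) * bigEVec R B L t l‖ ^ 2 := by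
  simp only [sum_mul_bigEVec_eq_expSum hinj hs, norm_mul, norm_inv, mul_pow, ← mul_sum,
    integral_muLevel, norm_real, Real.norm_of_nonneg (Real.sqrt_nonneg _),
    Real.sq_sqrt (prod_nonneg fun j _ => Nat.cast_nonneg _), inv_pow]

theorem integral_muLevel_norm_expSum_sq_bounds {P Q : ℝ}
    (h : IsRieszFamily (fun (l : (j : Fin n) → L j) (t : (j : Fin n) → B j) => bigEVec R B L t l)
      P Q) :
    P * ∑ lam ∈ a.support, ‖a lam‖ ^ 2 ≤ ∫ x, ‖expSum a x‖ ^ 2 ∂muLevel R B n ∧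
      ∫ x, ‖expSum a x‖ ^ 2 ∂muLevel R B n ≤ Q * ∑ lam ∈ a.support, ‖a lam‖ ^ 2 := by
  have hnorm : ∑ l, ‖a (tupleFreq R L l)‖ ^ 2 = ∑ lam ∈ a.support, ‖a lam‖ ^ 2 :=
    Fintype.sum_comp_eq_sum_of_injective (g := fun lam => ‖a lam‖ ^ 2) hinj hs fun lam hlam => by
      simp [Finsupp.notMem_support_iff.1 hlam]
  rw [integral_muLevel_norm_expSum_sq hinj hs, ← hnorm]
  exact h _

end Levels
theorem riesz_sequence_tower_gives_riesz_sequence_general {d : ℕ}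
    (R : ℕ → Matrix (Fin d) (Fin d) ℤ) (B L : ℕ → Finset (Fin d → ℤ)) (C D : ℕ → ℝ)
    (hexp : ∀ j, Expanding (R j))
    (h0L : ∀ j, (0 : Fin d → ℤ) ∈ L j)
    (hCD : ∀ j, 0 < C j ∧ C j ≤ D j)
    (htriple : ∀ j, IsRieszTriple (R j) (B j) (L j) (C j) (D j))
    (hPlim : Filter.Tendsto (fun n => ∏ j ∈ Finset.range n, C j) Filter.atTop (nhds P))
    (hQlim : Filter.Tendsto (fun n => ∏ j ∈ Finset.range n, D j) Filter.atTop (nhds Q))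
    (μ : Measure (Fin d → ℝ))
    (hweak : ∀ g : BoundedContinuousFunction (Fin d → ℝ) ℝ,
      Filter.Tendsto (fun n => ∫ x, g x ∂(muLevel R B n)) Filter.atTop
        (nhds (∫ x, g x ∂μ))) :
    ∀ a : (Fin d → ℤ) →₀ ℂ, (↑a.support : Set (Fin d → ℤ)) ⊆ freqSet R L →
      P * ∑ lam ∈ a.support, ‖a lam‖ ^ 2 ≤
        ∫ x, ‖∑ lam ∈ a.support,
          a lam * Complex.exp (2 * Real.pi * Complex.I * ip (castVec lam) x)‖ ^ 2 ∂μ ∧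
      ∫ x, ‖∑ lam ∈ a.support,
          a lam * Complex.exp (2 * Real.pi * Complex.I * ip (castVec lam) x)‖ ^ 2 ∂μ ≤
        Q * ∑ lam ∈ a.support, ‖a lam‖ ^ 2 := by
  intro a ha
  have htower := isRieszFamily_bigEVec (fun j => (hexp j).det_realMat_ne_zero)
    (fun j => (hCD j).1.le) (fun j => ((hCD j).1.trans_le (hCD j).2).le) htriple
  have hinj n := injective_tupleFreq (htower n) (prod_pos fun j _ => (hCD j).1)
  have hlevel := (eventually_subset_range_tupleFreq h0L a.support ha).mono fun n hs =>
    integral_muLevel_norm_expSum_sq_bounds (hinj n) hs (htower n)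
  have hlim := hweak (.ofNormedAddCommGroup (fun x => ‖expSum a x‖ ^ 2)
    ((continuous_expSum a).norm.pow 2) ((∑ lam ∈ a.support, ‖a lam‖) ^ 2) fun x => by
      rw [Real.norm_of_nonneg (by positivity)]
      exact pow_le_pow_left₀ (norm_nonneg _) (norm_expSum_le a x) 2)
  exact ⟨le_of_tendsto_of_tendsto (hPlim.mul_const _) hlim (hlevel.mono fun n h => h.1),
    le_of_tendsto_of_tendsto hlim (hQlim.mul_const _) (hlevel.mono fun n h => h.2)⟩

theorem riesz_sequence_tower_gives_riesz_sequence {d : ℕ}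
    (R : ℕ → Matrix (Fin d) (Fin d) ℤ) (B L : ℕ → Finset (Fin d → ℤ)) (C D : ℕ → ℝ)
    (hexp : ∀ j, Expanding (R j))
    (h0B : ∀ j, (0 : Fin d → ℤ) ∈ B j) (h0L : ∀ j, (0 : Fin d → ℤ) ∈ L j)
    (hCD : ∀ j, 0 < C j ∧ C j ≤ D j)
    (htriple : ∀ j, IsRieszTriple (R j) (B j) (L j) (C j) (D j))
    (hPlim : Filter.Tendsto (fun n => ∏ j ∈ Finset.range n, C j) Filter.atTop (nhds P))
    (hQlim : Filter.Tendsto (fun n => ∏ j ∈ Finset.range n, D j) Filter.atTop (nhds Q))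
    (μ : Measure (Fin d → ℝ)) [IsProbabilityMeasure μ]
    (hno : NoOverlap R B μ)
    (hweak : ∀ g : BoundedContinuousFunction (Fin d → ℝ) ℝ,
      Filter.Tendsto (fun n => ∫ x, g x ∂(muLevel R B n)) Filter.atTop
        (nhds (∫ x, g x ∂μ))) :
    ∀ a : (Fin d → ℤ) →₀ ℂ, (↑a.support : Set (Fin d → ℤ)) ⊆ freqSet R L →
      P * ∑ lam ∈ a.support, ‖a lam‖ ^ 2 ≤
        ∫ x, ‖∑ lam ∈ a.support,
          a lam * Complex.exp (2 * Real.pi * Complex.I * ip (castVec lam) x)‖ ^ 2 ∂μ ∧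
      ∫ x, ‖∑ lam ∈ a.support,
          a lam * Complex.exp (2 * Real.pi * Complex.I * ip (castVec lam) x)‖ ^ 2 ∂μ ≤
        Q * ∑ lam ∈ a.support, ‖a lam‖ ^ 2 :=
  riesz_sequence_tower_gives_riesz_sequence_general R B L C D hexp h0L hCD htriple hPlim hQlim μ
    hweak

end
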